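/- Lower bound on screened marginal components on the inactive set (proof of Proposition 2): For every i ∉ I, the screened optimal solution satisfies (ε/κ) Σ_{j=1}^m K_{ij} e^{v^sc_j} ≥ m·m_b·ε²·K_min²·(min_{j∈J} ν_j) / ( κ·( (n − n_b)·m·ε²·K_min + m·ε²·K_min + n_b·κ·(max_{i'∈I} μ_{i'}) ) ). -/

import Mathlib

open scoped Classical

/-! For `i ∈ I` the constraint on `uᵢ` is slack, so `∂Ψ/∂uᵢ = 0`, i.e.
`e^{uᵢ} ∑ⱼ Kᵢⱼ e^{vⱼ} = κ μᵢ`; raising `vⱼ` keeps the point feasible, so `∂Ψ/∂vⱼ ≥ 0`, i.e.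
`νⱼ / κ ≤ e^{vⱼ} ∑ᵢ e^{uᵢ} Kᵢⱼ`. Since `e^{vⱼ} ≥ εκ`, the first condition gives
`e^{uᵢ} ≤ μ_max / (m ε K_min)` on `I`, while `e^{uᵢ} = ε / κ` off `I`; as `K ≤ 1`, every column sum
is at most `S = (n - n_b) ε / κ + n_b μ_max / (m ε K_min)`. Hence `κ S e^{vⱼ} ≥ ν_min` on `J`, and
summing `Kᵢⱼ e^{vⱼ} ≥ K_min e^{vⱼ}` over `J` gives the bound, whose denominator is
`κ m ε K_min (κ S + ε)`. -/

open Real Set Filter Topology Function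

theorem sum_apply_update {ι α β : Type*} [Fintype ι] [DecidableEq ι] [AddCommGroup β]
    (F : ι → α → β) (u : ι → α) (i : ι) (s : α) :
    ∑ k, F k (update u i s k) = ∑ k, F k (u k) + (F i s - F i (u i)) := by
  rw [← sub_eq_iff_eq_add', ← Finset.sum_sub_distrib]
  refine (Fintype.sum_eq_single i fun k hk => ?_).trans (by rw [update_self])
  rw [update_of_ne hk, sub_self]

theorem HasDerivAt.nonneg_of_isMinOn_Ici {f : ℝ → ℝ} {f' x : ℝ} (hf : HasDerivAt f f' x)
    (hmin : IsMinOn f (Ici x) x) : 0 ≤ f' := by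
  refine ge_of_tendsto (hasDerivAt_iff_tendsto_slope_left_right.1 hf).2 ?_
  filter_upwards [self_mem_nhdsWithin] with y (hy : x < y)
  rw [slope_def_field]
  exact div_nonneg (sub_nonneg.2 (isMinOn_iff.1 hmin y hy.le)) (sub_nonneg.2 hy.le)

section ScreenedDual

variable {ι ι' : Type*}

def screenedFeasibleSet (ε κ : ℝ) (I : Finset ι) (J : Finset ι') :
    Set ((ι → ℝ) × (ι' → ℝ)) :=
  {p | (∀ i, ε / κ ≤ exp (p.1 i)) ∧ (∀ j, ε * κ ≤ exp (p.2 j)) ∧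
    (∀ i ∉ I, p.1 i = log (ε / κ)) ∧ (∀ j ∉ J, p.2 j = log (ε * κ))}

theorem mapsTo_update_left_screenedFeasibleSet [DecidableEq ι] {ε κ : ℝ} {I : Finset ι}
    {J : Finset ι'} {u : ι → ℝ} {v : ι' → ℝ} (h : (u, v) ∈ screenedFeasibleSet ε κ I J)
    {i : ι} (hi : i ∈ I) :
    MapsTo (fun s => (update u i s, v)) {s | ε / κ ≤ exp s} (screenedFeasibleSet ε κ I J) := by
  obtain ⟨hu, hv, hu', hv'⟩ := h
  refine fun s (hs : ε / κ ≤ exp s) => ⟨fun k => ?_, hv, fun k hk => ?_, hv'⟩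
  · rcases eq_or_ne k i with rfl | hki
    · simpa using hs
    · simpa [update_of_ne hki] using hu k
  · simpa [update_of_ne (ne_of_mem_of_not_mem hi hk).symm] using hu' k hk

theorem mapsTo_update_right_screenedFeasibleSet [DecidableEq ι'] {ε κ : ℝ} {I : Finset ι}
    {J : Finset ι'} {u : ι → ℝ} {v : ι' → ℝ} (h : (u, v) ∈ screenedFeasibleSet ε κ I J)
    {j : ι'} (hj : j ∈ J) :
    MapsTo (fun s => (u, update v j s)) {s | ε * κ ≤ exp s} (screenedFeasibleSet ε κ I J) := by
  obtain ⟨hu, hv, hu', hv'⟩ := h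
  refine fun s (hs : ε * κ ≤ exp s) => ⟨hu, fun k => ?_, hu', fun k hk => ?_⟩
  · rcases eq_or_ne k j with rfl | hkj
    · simpa using hs
    · simpa [update_of_ne hkj] using hv k
  · simpa [update_of_ne (ne_of_mem_of_not_mem hj hk).symm] using hv' k hk

variable [Fintype ι] [Fintype ι'] (K : ι → ι' → ℝ) (μ : ι → ℝ) (ν : ι' → ℝ) (κ : ℝ)

noncomputable def dualObjective (u : ι → ℝ) (v : ι' → ℝ) : ℝ :=
  (∑ i, ∑ j, exp (u i) * K i j * exp (v j)) - κ * (∑ i, u i * μ i) - (1 / κ) * (∑ j, v j * ν j)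

theorem dualObjective_update_left [DecidableEq ι] (u : ι → ℝ) (v : ι' → ℝ) (i : ι) (s : ℝ) :
    dualObjective K μ ν κ (update u i s) v = dualObjective K μ ν κ u v
      + ((∑ j, K i j * exp (v j)) * (exp s - exp (u i)) - κ * μ i * (s - u i)) := by
  have h₁ := sum_apply_update (fun k x => exp x * ∑ j, K k j * exp (v j)) u i s
  have h₂ := sum_apply_update (fun k x => x * μ k) u i s
  simp only [dualObjective, mul_assoc, ← Finset.mul_sum] at h₁ h₂ ⊢
  rw [h₁, h₂]
  ring

theorem dualObjective_update_right [DecidableEq ι'] (u : ι → ℝ) (v : ι' → ℝ) (j : ι') (s : ℝ) :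
    dualObjective K μ ν κ u (update v j s) = dualObjective K μ ν κ u v
      + ((∑ i, exp (u i) * K i j) * (exp s - exp (v j)) - ν j / κ * (s - v j)) := by
  have h₁ := sum_apply_update (fun k x => (∑ i, exp (u i) * K i k) * exp x) v j s
  have h₂ := sum_apply_update (fun k x => x * ν k) v j s
  have hswap : ∀ w : ι' → ℝ, ∑ i, ∑ k, exp (u i) * K i k * exp (w k)
      = ∑ k, (∑ i, exp (u i) * K i k) * exp (w k) := fun w => by
    rw [Finset.sum_comm]; simp only [Finset.sum_mul]
  simp only [dualObjective, hswap] at h₁ h₂ ⊢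
  rw [h₁, h₂]
  ring

theorem hasDerivAt_dualObjective_update_left [DecidableEq ι] (u : ι → ℝ) (v : ι' → ℝ) (i : ι)
    (s : ℝ) :
    HasDerivAt (fun s => dualObjective K μ ν κ (update u i s) v)
      ((∑ j, K i j * exp (v j)) * exp s - κ * μ i) s := by
  simp only [dualObjective_update_left]
  exact ((((hasDerivAt_exp s).sub_const _).const_mul _).sub
    (((hasDerivAt_id s).sub_const _).const_mul _)).const_add _ |>.congr_deriv (by ring)

theorem hasDerivAt_dualObjective_update_right [DecidableEq ι'] (u : ι → ℝ) (v : ι' → ℝ) (j : ι')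
    (s : ℝ) :
    HasDerivAt (fun s => dualObjective K μ ν κ u (update v j s))
      ((∑ i, exp (u i) * K i j) * exp s - ν j / κ) s := by
  simp only [dualObjective_update_right]
  exact ((((hasDerivAt_exp s).sub_const _).const_mul _).sub
    (((hasDerivAt_id s).sub_const _).const_mul _)).const_add _ |>.congr_deriv (by ring)

variable {K μ ν κ} {ε : ℝ} {I : Finset ι} {J : Finset ι'} {u : ι → ℝ} {v : ι' → ℝ}

theorem exp_mul_sum_eq_of_isMinOn_screenedFeasibleSet [DecidableEq ι]
    (hmin : IsMinOn (uncurry (dualObjective K μ ν κ)) (screenedFeasibleSet ε κ I J) (u, v))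
    (hmem : (u, v) ∈ screenedFeasibleSet ε κ I J) {i : ι} (hi : i ∈ I)
    (hact : ε / κ < exp (u i)) :
    exp (u i) * ∑ j, K i j * exp (v j) = κ * μ i := by
  have hnhds : {s | ε / κ ≤ exp s} ∈ 𝓝 (u i) :=
    mem_of_superset ((isOpen_lt continuous_const continuous_exp).mem_nhds hact)
      fun _ (hs : ε / κ < exp _) => hs.le
  have hloc : IsLocalMin (fun s => dualObjective K μ ν κ (update u i s) v) (u i) :=
    (hmin.comp_mapsTo (mapsTo_update_left_screenedFeasibleSet hmem hi) (by simp)).isLocalMin hnhds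
  have := hloc.hasDerivAt_eq_zero (hasDerivAt_dualObjective_update_left K μ ν κ u v i (u i))
  linarith

theorem div_le_exp_mul_sum_of_isMinOn_screenedFeasibleSet [DecidableEq ι']
    (hmin : IsMinOn (uncurry (dualObjective K μ ν κ)) (screenedFeasibleSet ε κ I J) (u, v))
    (hmem : (u, v) ∈ screenedFeasibleSet ε κ I J) {j : ι'} (hj : j ∈ J) :
    ν j / κ ≤ exp (v j) * ∑ i, exp (u i) * K i j := by
  have hIci : IsMinOn (fun s => dualObjective K μ ν κ u (update v j s)) (Ici (v j)) (v j) :=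
    (hmin.comp_mapsTo (mapsTo_update_right_screenedFeasibleSet hmem hj) (by simp)).on_subset
      fun _ hs => (hmem.2.1 j).trans (exp_le_exp.2 hs)
  have := (hasDerivAt_dualObjective_update_right K μ ν κ u v j (v j)).nonneg_of_isMinOn_Ici hIci
  linarith

theorem exp_mul_le_of_isMinOn_screenedFeasibleSet [DecidableEq ι] {Kmin μmax : ℝ} (hκ : 0 < κ)
    (hmin : IsMinOn (uncurry (dualObjective K μ ν κ)) (screenedFeasibleSet ε κ I J) (u, v))
    (hmem : (u, v) ∈ screenedFeasibleSet ε κ I J) {i : ι} (hi : i ∈ I)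
    (hact : ε / κ < exp (u i)) (hKmin : ∀ j, Kmin ≤ K i j) (hKmin_nonneg : 0 ≤ Kmin)
    (hμ : μ i ≤ μmax) :
    exp (u i) * (Fintype.card ι' * ε * Kmin) ≤ μmax := by
  have hrow : Fintype.card ι' * (Kmin * (ε * κ)) ≤ ∑ j, K i j * exp (v j) := by
    simpa using Finset.card_nsmul_le_sum Finset.univ _ _ fun j _ =>
      (mul_le_mul_of_nonneg_left (hmem.2.1 j) hKmin_nonneg).trans
        (mul_le_mul_of_nonneg_right (hKmin j) (exp_pos _).le)
  have hstat := exp_mul_sum_eq_of_isMinOn_screenedFeasibleSet hmin hmem hi hact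
  refine le_of_mul_le_mul_left ?_ hκ
  calc κ * (exp (u i) * (Fintype.card ι' * ε * Kmin))
      = exp (u i) * (Fintype.card ι' * (Kmin * (ε * κ))) := by ring
    _ ≤ exp (u i) * ∑ j, K i j * exp (v j) := by gcongr
    _ ≤ κ * μmax := by rw [hstat]; gcongr

end ScreenedDual

theorem sum_exp_mul_le_of_mem_screenedFeasibleSet {ι ι' : Type*} [Fintype ι] [DecidableEq ι]
    {K : ι → ι' → ℝ} {ε κ B : ℝ} {I : Finset ι} {J : Finset ι'} {u : ι → ℝ} {v : ι' → ℝ}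
    (hε : 0 < ε) (hκ : 0 < κ) (hmem : (u, v) ∈ screenedFeasibleSet ε κ I J) {j : ι'}
    (hK : ∀ i, K i j ≤ 1) (hB : ∀ i ∈ I, exp (u i) ≤ B) :
    ∑ i, exp (u i) * K i j ≤ (Fintype.card ι - I.card) * (ε / κ) + I.card * B := by
  have hu : ∀ i ∉ I, u i = log (ε / κ) := hmem.2.2.1
  have hout : ∑ i ∈ Iᶜ, exp (u i) = (Fintype.card ι - I.card) * (ε / κ) := by
    rw [Finset.sum_congr rfl fun i hi => by rw [hu i (Finset.mem_compl.1 hi),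
      exp_log (div_pos hε hκ)], Finset.sum_const, nsmul_eq_mul, Finset.card_compl,
      Nat.cast_sub I.card_le_univ]
  calc ∑ i, exp (u i) * K i j ≤ ∑ i, exp (u i) :=
        Finset.sum_le_sum fun i _ => mul_le_of_le_one_right (exp_pos _).le (hK i)
    _ = ∑ i ∈ Iᶜ, exp (u i) + ∑ i ∈ I, exp (u i) := (Finset.sum_compl_add_sum I _).symm
    _ ≤ (Fintype.card ι - I.card) * (ε / κ) + I.card * B := by
        rw [hout]; gcongr; simpa using Finset.sum_le_card_nsmul I _ _ hB

theorem card_mul_le_mul_sum_mul_exp {ι' : Type*} [Fintype ι'] {k : ι' → ℝ} {v : ι' → ℝ}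
    {J : Finset ι'} {Kmin νmin c : ℝ} (hKmin : ∀ j, Kmin ≤ k j) (hKmin_nonneg : 0 ≤ Kmin)
    (hc : 0 ≤ c) (hv : ∀ j ∈ J, νmin ≤ c * exp (v j)) :
    J.card * Kmin * νmin ≤ c * ∑ j, k j * exp (v j) := by
  have hterm : ∀ j, 0 ≤ c * (k j * exp (v j)) := fun j =>
    mul_nonneg hc (mul_nonneg (hKmin_nonneg.trans (hKmin j)) (exp_pos _).le)
  calc J.card * Kmin * νmin = ∑ j ∈ J, Kmin * νmin := by simp [mul_assoc]
    _ ≤ ∑ j ∈ J, c * (k j * exp (v j)) := Finset.sum_le_sum fun j hj =>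
        calc Kmin * νmin ≤ Kmin * (c * exp (v j)) := by gcongr; exact hv j hj
          _ ≤ k j * (c * exp (v j)) :=
            mul_le_mul_of_nonneg_right (hKmin j) (mul_nonneg hc (exp_pos _).le)
          _ = c * (k j * exp (v j)) := by ring
    _ ≤ ∑ j, c * (k j * exp (v j)) :=
        Finset.sum_le_sum_of_subset_of_nonneg J.subset_univ fun j _ _ => hterm j
    _ = c * ∑ j, k j * exp (v j) := Finset.mul_sum _ _ _ |>.symm

theorem marginal_bound_of_card_mul_le {n m nb mb ε κ Kmin νmin μmax X : ℝ} (hm : 0 < m)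
    (hε : 0 < ε) (hκ : 0 < κ) (hKmin : 0 < Kmin) (hX : 0 ≤ X)
    (hS : 0 ≤ (n - nb) * (ε / κ) + nb * (μmax / (m * ε * Kmin)))
    (h : mb * Kmin * νmin ≤ κ * ((n - nb) * (ε / κ) + nb * (μmax / (m * ε * Kmin))) * X) :
    m * mb * ε ^ 2 * Kmin ^ 2 * νmin /
        (κ * ((n - nb) * m * ε ^ 2 * Kmin + m * ε ^ 2 * Kmin + nb * κ * μmax))
      ≤ ε / κ * X := by
  set S := (n - nb) * (ε / κ) + nb * (μmax / (m * ε * Kmin))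
  have hden : κ * ((n - nb) * m * ε ^ 2 * Kmin + m * ε ^ 2 * Kmin + nb * κ * μmax)
      = κ * (m * ε * Kmin) * (κ * S + ε) := by
    simp only [S]; field_simp; ring
  calc _ = ε / κ * (mb * Kmin * νmin / (κ * S + ε)) := by rw [hden]; field_simp
    _ ≤ ε / κ * X := by
        gcongr
        rw [div_le_iff₀ (by positivity)]
        nlinarith

theorem lower_bound_inactive_marginal_general
    (n m : ℕ) (hm : 0 < m)
    (C : Fin n → Fin m → ℝ) (hC : ∀ i j, 0 ≤ C i j)
    (η : ℝ) (hη : 0 < η)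
    (K : Fin n → Fin m → ℝ) (hK : ∀ i j, K i j = Real.exp (-(C i j) / η))
    (μ : Fin n → ℝ) (ν : Fin m → ℝ)
    (ε κ : ℝ) (hε : 0 < ε) (hκ : 0 < κ)
    (I : Finset (Fin n))
    (J : Finset (Fin m))
    (Kmin : ℝ) (hKmin_le : ∀ i j, Kmin ≤ K i j) (hKmin_mem : ∃ i j, K i j = Kmin)
    (usc : Fin n → ℝ) (vsc : Fin m → ℝ)
    (husc_feas : ∀ i, ε / κ ≤ Real.exp (usc i))
    (hvsc_feas : ∀ j, ε * κ ≤ Real.exp (vsc j))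
    (husc_out : ∀ i ∉ I, usc i = Real.log (ε / κ))
    (hvsc_out : ∀ j ∉ J, vsc j = Real.log (ε * κ))
    (hsc_min : ∀ (u : Fin n → ℝ) (v : Fin m → ℝ),
      (∀ i, ε / κ ≤ Real.exp (u i)) → (∀ j, ε * κ ≤ Real.exp (v j)) →
      (∀ i ∉ I, u i = Real.log (ε / κ)) → (∀ j ∉ J, v j = Real.log (ε * κ)) →
      (∑ i, ∑ j, Real.exp (usc i) * K i j * Real.exp (vsc j))
          - κ * (∑ i, usc i * μ i) - (1 / κ) * (∑ j, vsc j * ν j)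
        ≤ (∑ i, ∑ j, Real.exp (u i) * K i j * Real.exp (v j))
          - κ * (∑ i, u i * μ i) - (1 / κ) * (∑ j, v j * ν j))
    (hactive_u : ∀ i ∈ I, ε / κ < Real.exp (usc i))
    (νminJ μmaxI : ℝ)
    (hνminJ : (∃ j ∈ J, ν j = νminJ) ∧ ∀ j ∈ J, νminJ ≤ ν j)
    (hμmaxI : (∃ i ∈ I, μ i = μmaxI) ∧ ∀ i ∈ I, μ i ≤ μmaxI) :
    ∀ i ∉ I,
      (m : ℝ) * J.card * ε ^ 2 * Kmin ^ 2 * νminJ /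
          (κ * (((n : ℝ) - I.card) * m * ε ^ 2 * Kmin + (m : ℝ) * ε ^ 2 * Kmin
            + (I.card : ℝ) * κ * μmaxI))
        ≤ ε / κ * ∑ j, K i j * Real.exp (vsc j) := by
  intro i _
  have hK_pos : ∀ i j, 0 < K i j := fun i j => hK i j ▸ exp_pos _
  have hK_le_one : ∀ i j, K i j ≤ 1 := fun i j => hK i j ▸
    exp_le_one_iff.2 (div_nonpos_of_nonpos_of_nonneg (neg_nonpos.2 (hC i j)) hη.le)
  have hKmin : 0 < Kmin := by obtain ⟨i, j, h⟩ := hKmin_mem; exact h ▸ hK_pos i j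
  have hmem : (usc, vsc) ∈ screenedFeasibleSet ε κ I J :=
    ⟨husc_feas, hvsc_feas, husc_out, hvsc_out⟩
  have hmin : IsMinOn (uncurry (dualObjective K μ ν κ)) (screenedFeasibleSet ε κ I J) (usc, vsc) :=
    isMinOn_iff.2 fun ⟨u, v⟩ ⟨h₁, h₂, h₃, h₄⟩ => hsc_min u v h₁ h₂ h₃ h₄
  set B := μmaxI / (m * ε * Kmin)
  set S := ((n : ℝ) - I.card) * (ε / κ) + I.card * B
  have hrow : ∀ i ∈ I, exp (usc i) ≤ B := fun i hi => (le_div_iff₀ (by positivity)).2 <| by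
    simpa using exp_mul_le_of_isMinOn_screenedFeasibleSet hκ hmin hmem hi (hactive_u i hi)
      (hKmin_le i) hKmin.le (hμmaxI.2 i hi)
  have hcol : ∀ j, ∑ i, exp (usc i) * K i j ≤ S := fun j => by
    simpa using sum_exp_mul_le_of_mem_screenedFeasibleSet hε hκ hmem (hK_le_one · j) hrow
  have hv : ∀ j ∈ J, νminJ ≤ κ * S * exp (vsc j) := fun j hj => calc
    νminJ ≤ ν j := hνminJ.2 j hj
    _ ≤ κ * (exp (vsc j) * ∑ i, exp (usc i) * K i j) :=
      (div_le_iff₀' hκ).1 (div_le_exp_mul_sum_of_isMinOn_screenedFeasibleSet hmin hmem hj)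
    _ ≤ κ * (exp (vsc j) * S) := by gcongr; exact hcol j
    _ = κ * S * exp (vsc j) := by ring
  have hS : 0 ≤ S := (Finset.sum_nonneg fun i _ =>
    (mul_pos (exp_pos _) (hK_pos i ⟨0, hm⟩)).le).trans (hcol ⟨0, hm⟩)
  have hX : 0 ≤ ∑ j, K i j * exp (vsc j) :=
    Finset.sum_nonneg fun j _ => (mul_pos (hK_pos i j) (exp_pos _)).le
  exact marginal_bound_of_card_mul_le (Nat.cast_pos.2 hm) hε hκ hKmin hX hS
    (card_mul_le_mul_sum_mul_exp (hKmin_le i) hKmin.le (by positivity) hv)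

theorem lower_bound_inactive_marginal
    (n m : ℕ) (hn : 0 < n) (hm : 0 < m)
    (C : Fin n → Fin m → ℝ) (hC : ∀ i j, 0 ≤ C i j)
    (η : ℝ) (hη : 0 < η)
    (K : Fin n → Fin m → ℝ) (hK : ∀ i j, K i j = Real.exp (-(C i j) / η))
    (μ : Fin n → ℝ) (ν : Fin m → ℝ)
    (hμpos : ∀ i, 0 < μ i) (hνpos : ∀ j, 0 < ν j)
    (hμsum : ∑ i, μ i = 1) (hνsum : ∑ j, ν j = 1)
    (ε κ : ℝ) (hε : 0 < ε) (hκ : 0 < κ)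
    (I : Finset (Fin n)) (hI : ∀ i, i ∈ I ↔ ε ^ 2 / κ * (∑ j, K i j) ≤ μ i)
    (J : Finset (Fin m)) (hJ : ∀ j, j ∈ J ↔ κ * ε ^ 2 * (∑ i, K i j) ≤ ν j)
    (hIne : I.Nonempty) (hJne : J.Nonempty)
    (Kmin : ℝ) (hKmin_le : ∀ i j, Kmin ≤ K i j) (hKmin_mem : ∃ i j, K i j = Kmin)
    (usc : Fin n → ℝ) (vsc : Fin m → ℝ)
    (husc_feas : ∀ i, ε / κ ≤ Real.exp (usc i))
    (hvsc_feas : ∀ j, ε * κ ≤ Real.exp (vsc j))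
    (husc_out : ∀ i ∉ I, usc i = Real.log (ε / κ))
    (hvsc_out : ∀ j ∉ J, vsc j = Real.log (ε * κ))
    (hsc_min : ∀ (u : Fin n → ℝ) (v : Fin m → ℝ),
      (∀ i, ε / κ ≤ Real.exp (u i)) → (∀ j, ε * κ ≤ Real.exp (v j)) →
      (∀ i ∉ I, u i = Real.log (ε / κ)) → (∀ j ∉ J, v j = Real.log (ε * κ)) →
      (∑ i, ∑ j, Real.exp (usc i) * K i j * Real.exp (vsc j))
          - κ * (∑ i, usc i * μ i) - (1 / κ) * (∑ j, vsc j * ν j)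
        ≤ (∑ i, ∑ j, Real.exp (u i) * K i j * Real.exp (v j))
          - κ * (∑ i, u i * μ i) - (1 / κ) * (∑ j, v j * ν j))
    (hactive_u : ∀ i ∈ I, ε / κ < Real.exp (usc i))
    (hactive_v : ∀ j ∈ J, ε * κ < Real.exp (vsc j))
    (νminJ μmaxI : ℝ)
    (hνminJ : (∃ j ∈ J, ν j = νminJ) ∧ ∀ j ∈ J, νminJ ≤ ν j)
    (hμmaxI : (∃ i ∈ I, μ i = μmaxI) ∧ ∀ i ∈ I, μ i ≤ μmaxI) :
    ∀ i ∉ I,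
      (m : ℝ) * J.card * ε ^ 2 * Kmin ^ 2 * νminJ /
          (κ * (((n : ℝ) - I.card) * m * ε ^ 2 * Kmin + (m : ℝ) * ε ^ 2 * Kmin
            + (I.card : ℝ) * κ * μmaxI))
        ≤ ε / κ * ∑ j, K i j * Real.exp (vsc j) :=
  lower_bound_inactive_marginal_general n m hm C hC η hη K hK μ ν ε κ hε hκ I J Kmin hKmin_le
    hKmin_mem usc vsc husc_feas hvsc_feas husc_out hvsc_out hsc_min hactive_u νminJ μmaxI hνminJ
    hμmaxI
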